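/- Let V be a finite-dimensional real inner product space of dimension 2n (n ≥ 1), let J : V → V be a linear isometry with J ∘ J = −id, and let A : V → V be a self-adjoint linear operator satisfying A ∘ J = −J ∘ A. Then there exist vectors e₁, …, e_n ∈ V and real numbers λ₁, …, λ_n such that the family (e₁, J e₁, …, e_n, J e_n) is an orthonormal basis of V and, for each i, A e_i = λ_i e_i and A (J e_i) = −λ_i (J e_i). -/

import Mathlib

/-!
A symmetric `A` has a unit eigenvector `u`, say `A u = μ u`. As `A J = -J A`, `J u` is an
eigenvector for `-μ`, and it is a unit vector orthogonal to `u` because `J` is an isometry with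
`J² = -1`, hence skew-symmetric. The plane `span {u, J u}` is invariant under `A` and `J`, so its
orthogonal complement is too (`A` symmetric, `J` skew-symmetric), and one inducts on the dimension
of an invariant subspace. The eigenvectors so obtained are orthonormal and orthogonal to their
images under `J`, so together with those images they form an orthonormal basis.
-/

open scoped InnerProductSpace RealInnerProductSpace
open Module Module.End Submodule

theorem Submodule.span_mem_invtSubmodule {R M : Type*} [Semiring R] [AddCommMonoid M]
    [Module R M] {T : Module.End R M} {s : Set M} (h : ∀ x ∈ s, T x ∈ span R s) :
    span R s ∈ invtSubmodule T :=
  span_le.mpr h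

section RCLike

variable {𝕜 E : Type*} [RCLike 𝕜] [NormedAddCommGroup E] [InnerProductSpace 𝕜 E]

theorem LinearMap.IsSymmetric.exists_eigenvector_norm_eq_one_mem [FiniteDimensional 𝕜 E]
    {T : Module.End 𝕜 E} (hT : T.IsSymmetric) {W : Submodule 𝕜 E} (hW : W ∈ invtSubmodule T)
    (hW0 : 0 < finrank 𝕜 W) : ∃ u ∈ W, ‖u‖ = 1 ∧ ∃ μ : 𝕜, T u = μ • u := by
  have hTW := hT.restrict_invariant hW
  let u := hTW.eigenvectorBasis rfl ⟨0, hW0⟩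
  exact ⟨u, u.2, (hTW.eigenvectorBasis rfl).orthonormal.1 _, _,
    congrArg Subtype.val (hTW.apply_eigenvectorBasis rfl ⟨0, hW0⟩)⟩

def LinearMap.IsSkewSymmetric (T : Module.End 𝕜 E) : Prop :=
  ∀ x y, ⟪T x, y⟫_𝕜 = -⟪x, T y⟫_𝕜

theorem LinearMap.isSkewSymmetric_of_inner_map_map {J : Module.End 𝕜 E}
    (hJiso : ∀ x y, ⟪J x, J y⟫_𝕜 = ⟪x, y⟫_𝕜) (hJ2 : ∀ x, J (J x) = -x) : J.IsSkewSymmetric :=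
  fun x y ↦ by rw [← hJiso, hJ2, inner_neg_left]

theorem LinearMap.IsSkewSymmetric.orthogonalComplement_mem_invtSubmodule {T : Module.End 𝕜 E}
    (hT : T.IsSkewSymmetric) {p : Submodule 𝕜 E} (hp : p ∈ invtSubmodule T) :
    pᗮ ∈ invtSubmodule T := fun x hx y hy ↦ by
  rw [← neg_eq_zero, ← hT, hx (T y) (hp hy)]

theorem Orthonormal.fin_cons {n : ℕ} {v : Fin n → E} (hv : Orthonormal 𝕜 v) {u : E}
    (hu : ‖u‖ = 1) (huv : ∀ i, ⟪u, v i⟫_𝕜 = 0) :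
    Orthonormal 𝕜 (Fin.cons u v : Fin (n + 1) → E) := by
  refine ⟨Fin.cases hu hv.1, fun i j hij ↦ ?_⟩
  cases i using Fin.cases <;> cases j using Fin.cases
  · exact absurd rfl hij
  · exact huv _
  · simpa [inner_eq_zero_symm] using huv _
  · exact hv.2 fun h ↦ hij (congrArg Fin.succ h)

end RCLike

section Real

variable {V : Type*} [NormedAddCommGroup V] [InnerProductSpace ℝ V] {J A : Module.End ℝ V}

theorem LinearMap.IsSkewSymmetric.real_inner_self_map (hJ : J.IsSkewSymmetric) (x : V) :
    ⟪x, J x⟫ = 0 := by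
  linarith [hJ x x, real_inner_comm x (J x)]

theorem orthonormal_sum_elim_map_iff (hJiso : ∀ x y : V, ⟪J x, J y⟫ = ⟪x, y⟫) {ι : Type*}
    {e : ι → V} :
    Orthonormal ℝ (Sum.elim e fun i ↦ J (e i)) ↔
      Orthonormal ℝ e ∧ ∀ i j, ⟪e i, J (e j)⟫ = 0 := by
  classical
  simp only [orthonormal_iff_ite, Sum.forall, Sum.elim_inl, Sum.elim_inr, Sum.inl.injEq,
    Sum.inr.injEq, reduceCtorEq, if_false, hJiso, fun i j ↦ real_inner_comm (e i) (J (e j)),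
    forall_and]
  tauto

theorem finrank_span_pair_map (hJiso : ∀ x y : V, ⟪J x, J y⟫ = ⟪x, y⟫)
    (hJ2 : ∀ x, J (J x) = -x) {u : V} (hu : ‖u‖ = 1) : finrank ℝ (span ℝ {u, J u}) = 2 := by
  have hJu : ⟪u, J u⟫ = 0 :=
    (LinearMap.isSkewSymmetric_of_inner_map_map hJiso hJ2).real_inner_self_map u
  have hJu1 : ‖J u‖ = 1 := by
    rw [norm_eq_sqrt_real_inner, hJiso, ← norm_eq_sqrt_real_inner, hu]
  have hON : Orthonormal ℝ ![u, J u] := by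
    rw [orthonormal_iff_ite]
    simp [Fin.forall_fin_two, hu, hJu1, hJu, real_inner_comm u]
  rw [← Matrix.range_cons_cons_empty u (J u) ![], finrank_span_eq_card hON.linearIndependent,
    Fintype.card_fin]

theorem exists_orthonormal_eigenvectors_of_mem_invtSubmodule [FiniteDimensional ℝ V]
    (hJiso : ∀ x y : V, ⟪J x, J y⟫ = ⟪x, y⟫) (hJ2 : ∀ x, J (J x) = -x) (hA : A.IsSymmetric)
    (hAJ : ∀ x, A (J x) = -(J (A x))) :
    ∀ (n : ℕ) (W : Submodule ℝ V), W ∈ invtSubmodule J → W ∈ invtSubmodule A →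
      finrank ℝ W = 2 * n → ∃ (e : Fin n → V) (l : Fin n → ℝ), (∀ i, e i ∈ W) ∧
        Orthonormal ℝ e ∧ (∀ i j, ⟪e i, J (e j)⟫ = 0) ∧ ∀ i, A (e i) = l i • e i
  | 0, _, _, _, _ =>
    ⟨Fin.elim0, Fin.elim0, fun i ↦ i.elim0, ⟨fun i ↦ i.elim0, fun i ↦ i.elim0⟩,
      fun i ↦ i.elim0, fun i ↦ i.elim0⟩
  | n + 1, W, hJW, hAW, hdim => by
    have hJ := LinearMap.isSkewSymmetric_of_inner_map_map hJiso hJ2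
    obtain ⟨u, huW, hu, μ, hAu⟩ := hA.exists_eigenvector_norm_eq_one_mem hAW (by omega)
    set K := span ℝ {u, J u}
    have huK : u ∈ K := subset_span (Set.mem_insert _ _)
    have hJuK : J u ∈ K := subset_span (Set.mem_insert_of_mem _ rfl)
    have hKJ : K ∈ invtSubmodule J := span_mem_invtSubmodule <| by
      rintro _ (rfl | rfl)
      · exact hJuK
      · rw [hJ2]
        exact neg_mem huK
    have hKA : K ∈ invtSubmodule A := span_mem_invtSubmodule <| by
      rintro _ (rfl | rfl)
      · rw [hAu]
        exact smul_mem _ _ huK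
      · rw [hAJ, hAu, map_smul]
        exact neg_mem (smul_mem _ _ hJuK)
    have hKW : K ≤ W :=
      span_le.mpr (Set.insert_subset huW (Set.singleton_subset_iff.mpr (hJW huW)))
    obtain ⟨e, l, heW, he, heJ, hAe⟩ := exists_orthonormal_eigenvectors_of_mem_invtSubmodule
      hJiso hJ2 hA hAJ n (Kᗮ ⊓ W)
      (invtSubmodule.inf_mem (hJ.orthogonalComplement_mem_invtSubmodule hKJ) hJW)
      (invtSubmodule.inf_mem (hA.orthogonalComplement_mem_invtSubmodule hKA) hAW)
      (finrank_add_inf_finrank_orthogonal' hKW <| by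
        rw [finrank_span_pair_map hJiso hJ2 hu, hdim]
        ring)
    have heK : ∀ i, e i ∈ Kᗮ := fun i ↦ (heW i).1
    refine ⟨Fin.cons u e, Fin.cons μ l, Fin.cases huW fun i ↦ (heW i).2,
      he.fin_cons hu fun i ↦ inner_right_of_mem_orthogonal huK (heK i), fun i j ↦ ?_,
      Fin.cases hAu hAe⟩
    cases i using Fin.cases <;> cases j using Fin.cases
    · exact hJ.real_inner_self_map u
    · exact inner_right_of_mem_orthogonal huK
        (hJ.orthogonalComplement_mem_invtSubmodule hKJ (heK _))
    · exact inner_left_of_mem_orthogonal hJuK (heK _)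
    · exact heJ _ _

end Real

theorem shape_operator_normal_form_general {V : Type*} [NormedAddCommGroup V]
    [InnerProductSpace ℝ V] [FiniteDimensional ℝ V] (n : ℕ)
    (hdim : Module.finrank ℝ V = 2 * n)
    (J A : V →ₗ[ℝ] V)
    (hJiso : ∀ x y : V, ⟪J x, J y⟫ = ⟪x, y⟫)
    (hJ2 : ∀ x : V, J (J x) = -x)
    (hA : ∀ x y : V, ⟪A x, y⟫ = ⟪x, A y⟫)
    (hAJ : ∀ x : V, A (J x) = -(J (A x))) :
    ∃ (e : Fin n → V) (l : Fin n → ℝ),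
      Orthonormal ℝ (Sum.elim e (fun i => J (e i))) ∧
      Submodule.span ℝ (Set.range (Sum.elim e (fun i => J (e i)))) = ⊤ ∧
      ∀ i : Fin n, A (e i) = l i • e i ∧ A (J (e i)) = (-(l i)) • J (e i) := by
  obtain ⟨e, l, -, he, heJ, hAe⟩ := exists_orthonormal_eigenvectors_of_mem_invtSubmodule
    hJiso hJ2 hA hAJ n ⊤ (invtSubmodule.top_mem J) (invtSubmodule.top_mem A)
    (by rw [finrank_top, hdim])
  have hON := (orthonormal_sum_elim_map_iff hJiso).mpr ⟨he, heJ⟩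
  refine ⟨e, l, hON, hON.linearIndependent.span_eq_top_of_card_eq_finrank' ?_,
    fun i ↦ ⟨hAe i, by rw [hAJ, hAe, map_smul, neg_smul]⟩⟩
  rw [Fintype.card_sum, Fintype.card_fin, hdim, two_mul]

/-- Normal form of the shape operator of a Kähler hypersurface: if `V` is a real inner
product space of dimension `2n`, `J` is a linear isometry with `J² = −id`, and `A` is
self-adjoint with `A ∘ J = −J ∘ A`, then there is an orthonormal basis
`(e₁, Je₁, …, e_n, Je_n)` of `V` and reals `λ₁, …, λ_n` with `A eᵢ = λᵢ eᵢ` and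
`A (J eᵢ) = −λᵢ (J eᵢ)`. -/
theorem shape_operator_normal_form {V : Type*} [NormedAddCommGroup V]
    [InnerProductSpace ℝ V] [FiniteDimensional ℝ V] (n : ℕ) (hn : 1 ≤ n)
    (hdim : Module.finrank ℝ V = 2 * n)
    (J A : V →ₗ[ℝ] V)
    (hJiso : ∀ x y : V, ⟪J x, J y⟫ = ⟪x, y⟫)
    (hJ2 : ∀ x : V, J (J x) = -x)
    (hA : ∀ x y : V, ⟪A x, y⟫ = ⟪x, A y⟫)
    (hAJ : ∀ x : V, A (J x) = -(J (A x))) :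
    ∃ (e : Fin n → V) (l : Fin n → ℝ),
      Orthonormal ℝ (Sum.elim e (fun i => J (e i))) ∧
      Submodule.span ℝ (Set.range (Sum.elim e (fun i => J (e i)))) = ⊤ ∧
      ∀ i : Fin n, A (e i) = l i • e i ∧ A (J (e i)) = (-(l i)) • J (e i) :=
  shape_operator_normal_form_general n hdim J A hJiso hJ2 hA hAJ
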